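/- For every λ ∈ ℂ with λ ≠ 0 and λ ≠ 1, and every n ∈ ℤ_{≥0}, the identity λ·H_n(x|λ^{−1}) + H_n(x|λ) = (1+λ)·Σ_{k=0}^{n} binom(n,k)·H_{n−k}(λ^{−1})·H_k(x|λ) holds as an identity of polynomials in x. -/

import Mathlib

open Polynomial PowerSeries Finset

/-!
Write `F_μ(x) = (1 - μ) e^{xt} / (e^t - μ)` for the generating function of `H_n(x|μ)`. The claim
is the coefficient of `t^n / n!` in `λ F_{λ⁻¹}(x) + F_λ(x) = (1 + λ) F_λ(x) F_{λ⁻¹}(0)`, where the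
product of exponential generating functions produces the binomial convolution. After clearing the
denominators `e^t - λ` and `e^t - λ⁻¹` (non-zero divisors, as `ℂ[x]⟦t⟧` is a domain) this is the
scalar identity `λ (1 - λ⁻¹) (e^t - λ) + (1 - λ) (e^t - λ⁻¹) = (1 + λ) (1 - λ⁻¹) (1 - λ)`.
The series `F_{λ⁻¹}(0)` comes from mapping `F_{λ⁻¹}(x)` through `p ↦ p(0)`, which sends `e^{xt}`
to `1`.
-/

-- `E, l, l'` stand for `e^t, λ, λ⁻¹` and `F, M, N` for `F_λ(x), F_{λ⁻¹}(x), F_{λ⁻¹}(0)`.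
theorem mul_add_eq_one_add_mul_mul_of_mul_eq_one {A : Type*} [CommRing A] {E G F M N l l' : A}
    (hll' : l * l' = 1) (hl : IsLeftRegular (E - l)) (hl' : IsLeftRegular (E - l'))
    (hF : (E - l) * F = (1 - l) * G) (hM : (E - l') * M = (1 - l') * G)
    (hN : (E - l') * N = 1 - l') :
    l * M + F = (1 + l) * (F * N) := by
  refine hl (hl' ?_)
  linear_combination (l * (E - l)) * hM + (E - l') * hF - ((1 + l) * (E - l) * F) * hN
    - ((1 + l) * (1 - l')) * hF + (G * (1 - E)) * hll'

namespace PowerSeries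

section Egf

variable (K : Type*) {A : Type*} [Field K] [CommRing A] [Algebra K A]

def egf (a : ℕ → A) : A⟦X⟧ := mk fun n => algebraMap K A (n.factorial : K)⁻¹ * a n

variable {K}

theorem coeff_egf_mul_egf [CharZero K] (a b : ℕ → A) (n : ℕ) :
    coeff n (egf K a * egf K b) =
      algebraMap K A (n.factorial : K)⁻¹ *
        ∑ k ∈ range (n + 1), (n.choose k : A) * a k * b (n - k) := by
  rw [coeff_mul, Nat.sum_antidiagonal_eq_sum_range_succ_mk, mul_sum]
  refine sum_congr rfl fun k hk => ?_
  have hkn : k ≤ n := Nat.lt_succ_iff.mp (mem_range.mp hk)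
  have hfac :
      (n.factorial : K)⁻¹ * n.choose k = (k.factorial : K)⁻¹ * ((n - k).factorial : K)⁻¹ := by
    rw [Nat.cast_choose K hkn]
    have : (n.factorial : K) ≠ 0 := Nat.cast_ne_zero.mpr n.factorial_ne_zero
    field_simp
  have hfacA := congrArg (algebraMap K A) hfac
  rw [map_mul, map_mul, map_natCast] at hfacA
  simp only [egf, coeff_mk]
  linear_combination (a k * b (n - k)) * hfacA.symm

theorem map_egf {B : Type*} [CommRing B] [Algebra K B] (f : A →ₐ[K] B) (a : ℕ → A) :
    map f (egf K a) = egf K (f ∘ a) := by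
  ext n
  simp [egf]

end Egf

theorem map_rescale_exp_of_map_eq_zero {A B : Type*} [CommRing A] [CommRing B] [Algebra ℚ A]
    [Algebra ℚ B] (f : A →+* B) {a : A} (ha : f a = 0) :
    map f (rescale a (exp A)) = 1 := by
  rw [← rescale_map, map_exp, ha, rescale_zero_apply, constantCoeff_exp, map_one]

theorem exp_sub_C_ne_zero {A : Type*} [CommRing A] [Algebra ℚ A] [Nontrivial A] (a : A) :
    exp A - C a ≠ 0 := by
  intro h
  simpa [coeff_exp, coeff_C] using congrArg (coeff 1) h

end PowerSeries

theorem frobenius_euler_inverse_lambda_identity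
    (lam : ℂ) (hlam0 : lam ≠ 0) (hlam : lam ≠ 1) (H : ℂ → ℕ → Polynomial ℂ)
    (hH : ∀ mu : ℂ, mu ≠ 1 →
      (PowerSeries.exp (Polynomial ℂ) - PowerSeries.C (Polynomial.C mu)) *
          PowerSeries.mk (fun n => Polynomial.C ((n.factorial : ℂ))⁻¹ * H mu n) =
        PowerSeries.C (Polynomial.C (1 - mu)) *
          PowerSeries.rescale Polynomial.X (PowerSeries.exp (Polynomial ℂ)))
    (n : ℕ) :
    Polynomial.C lam * H lam⁻¹ n + H lam n =
      Polynomial.C (1 + lam) * ∑ k ∈ Finset.range (n + 1),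
        Polynomial.C ((n.choose k : ℂ) * (H lam⁻¹ (n - k)).eval 0) * H lam k := by
  set E := exp ℂ[X]
  let c : ℂ →+* ℂ[X]⟦X⟧ := PowerSeries.C.comp Polynomial.C
  have hgf (mu : ℂ) (hmu : mu ≠ 1) :
      (E - c mu) * egf ℂ (H mu) = (1 - c mu) * rescale Polynomial.X E := by
    rw [← map_one c, ← map_sub]
    exact hH mu hmu
  have hinv : lam⁻¹ ≠ 1 := inv_ne_one.mpr hlam
  let evalZero : ℂ[X] →ₐ[ℂ] ℂ[X] := (Algebra.ofId ℂ ℂ[X]).comp (Polynomial.aeval 0)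
  have hN : (E - c lam⁻¹) * egf ℂ (evalZero ∘ H lam⁻¹) = 1 - c lam⁻¹ := by
    have := congrArg (PowerSeries.map (evalZero : ℂ[X] →+* ℂ[X])) (hgf _ hinv)
    rw [map_mul, map_mul, map_rescale_exp_of_map_eq_zero _ (by simp [evalZero]), mul_one,
      map_egf] at this
    simpa [c, E, evalZero] using this
  have hreg (mu : ℂ) : IsLeftRegular (E - c mu) :=
    (IsRegular.of_ne_zero (exp_sub_C_ne_zero _)).left
  have key := mul_add_eq_one_add_mul_mul_of_mul_eq_one
    (by rw [← map_mul, mul_inv_cancel₀ hlam0, map_one]) (hreg lam) (hreg lam⁻¹)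
    (hgf lam hlam) (hgf _ hinv) hN
  rw [← map_one c, ← map_add] at key
  have hcoeff := congrArg (PowerSeries.coeff n) key
  simp only [c, RingHom.comp_apply, map_add (PowerSeries.coeff n), PowerSeries.coeff_C_mul,
    coeff_egf_mul_egf] at hcoeff
  simp only [egf, coeff_mk, Function.comp_apply] at hcoeff
  have hsum : ∑ k ∈ range (n + 1), (n.choose k : ℂ[X]) * H lam k * evalZero (H lam⁻¹ (n - k)) =
      ∑ k ∈ range (n + 1), Polynomial.C ((n.choose k : ℂ) * (H lam⁻¹ (n - k)).eval 0) * H lam k :=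
    sum_congr rfl fun k _ => by simp [evalZero]; ring
  have hfac : algebraMap ℂ ℂ[X] (n.factorial : ℂ)⁻¹ ≠ 0 := by simp [Nat.factorial_ne_zero]
  refine mul_left_cancel₀ hfac ?_
  linear_combination hcoeff + Polynomial.C (1 + lam) * algebraMap ℂ ℂ[X] (n.factorial : ℂ)⁻¹ * hsum
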